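/- The matrix exponential map exp : Sym(n) → SPD(n) is a bijection from the space of symmetric real n×n matrices onto the set of symmetric positive-definite real n×n matrices. -/

import Mathlib

/-!
On a self-adjoint element `a`, `exp a` is the continuous functional calculus of `Real.exp`, so its
spectrum is positive and `CFC.log` (the functional calculus of `Real.log`) inverts it on both
sides. Real matrices with the L2 operator norm form such an algebra; that norm induces the usual
topology, so `NormedSpace.exp` there is the matrix exponential.
-/

section

variable {A : Type*} [NormedRing A] [StarRing A] [NormedAlgebra ℝ A]
  [ContinuousFunctionalCalculus ℝ A IsSelfAdjoint] [PartialOrder A] [StarOrderedRing A]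
  [NonnegSpectrumClass ℝ A]

lemma IsSelfAdjoint.isStrictlyPositive_exp {a : A} (ha : IsSelfAdjoint a) :
    IsStrictlyPositive (NormedSpace.exp a) := by
  rw [← CFC.real_exp_eq_normedSpace_exp]
  exact (cfc_isStrictlyPositive_iff _ a).mpr fun x _ => Real.exp_pos x

theorem NormedSpace.exp_bijOn_isSelfAdjoint_isStrictlyPositive :
    Set.BijOn exp {a : A | IsSelfAdjoint a} {a : A | IsStrictlyPositive a} := by
  refine ⟨fun a ha => IsSelfAdjoint.isStrictlyPositive_exp ha, fun a ha b hb hab => ?_,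
    fun b hb => ⟨CFC.log b, IsSelfAdjoint.log, CFC.exp_log b hb⟩⟩
  rw [← CFC.log_exp a ha, hab, CFC.log_exp b hb]

end

open Matrix

open scoped Matrix.Norms.L2Operator MatrixOrder in
/-- The matrix exponential is a bijection from the space of real symmetric
`n×n` matrices onto the set of symmetric positive-definite matrices. -/
theorem exp_bijOn_spd (n : ℕ) :
    Set.BijOn (NormedSpace.exp)
      {A : Matrix (Fin n) (Fin n) ℝ | Aᵀ = A}
      {x : Matrix (Fin n) (Fin n) ℝ | x.PosDef} := by
  have h_symm : {A : Matrix (Fin n) (Fin n) ℝ | Aᵀ = A} = {A | IsSelfAdjoint A} :=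
    Set.ext fun _ => by simp [IsSelfAdjoint, star_eq_conjTranspose]
  have h_posDef : {x : Matrix (Fin n) (Fin n) ℝ | x.PosDef} = {x | IsStrictlyPositive x} :=
    Set.ext fun _ => isStrictlyPositive_iff_posDef.symm
  rw [h_symm, h_posDef]
  exact NormedSpace.exp_bijOn_isSelfAdjoint_isStrictlyPositive
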